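/- arXiv:1406.5689 — 6 statements merged into one kernel-verified Lean document; each statement's English description precedes it below -/
import Mathlib

section
/- If a group G acts freely on a set X and G admits a paradoxical decomposition with translating sets S1 and S2, then the action of G on X admits a paradoxical decomposition with the same translating sets S1 and S2. -/
open Pointwise
/-- A (left-action mirror of a) paradoxical decomposition of the action of `G` on `X`
with translating sets `S1`, `S2`: pairwise disjoint pieces `P s` (`s ∈ S1`) and
`Q t` (`t ∈ S2`) with `X = ⋃ s • P s = ⋃ t • Q t`. -/
def IsParaDecomp (G X : Type*) [Group G] [MulAction G X] (S1 S2 : Finset G) : Prop :=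
  ∃ P Q : G → Set X,
    (∀ s ∈ S1, ∀ s' ∈ S1, s ≠ s' → Disjoint (P s) (P s')) ∧
    (∀ t ∈ S2, ∀ t' ∈ S2, t ≠ t' → Disjoint (Q t) (Q t')) ∧
    (∀ s ∈ S1, ∀ t ∈ S2, Disjoint (P s) (Q t)) ∧
    (⋃ s ∈ S1, s • P s) = Set.univ ∧
    (⋃ t ∈ S2, t • Q t) = Set.univ

/-!
Choosing a representative in each orbit of a free action, every point is `g • r` for a unique
`g`; recording this `g` is a `G`-equivariant map `X → G`. Preimages of the pieces of a paradoxical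
decomposition of `G` under an equivariant map form a paradoxical decomposition of `X`, because
taking preimages commutes with translation, disjointness and unions.
-/

theorem IsParaDecomp.comap {G X Y : Type*} [Group G] [MulAction G X] [MulAction G Y]
    {S1 S2 : Finset G} (f : X →[G] Y) (h : IsParaDecomp G Y S1 S2) :
    IsParaDecomp G X S1 S2 := by
  obtain ⟨P, Q, hP, hQ, hPQ, hPcover, hQcover⟩ := h
  have preimage_cover : ∀ (S : Finset G) (R : G → Set Y), (⋃ s ∈ S, s • R s) = Set.univ →
      (⋃ s ∈ S, s • f ⁻¹' R s) = Set.univ := fun S R hR => by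
    simp_rw [← Group.preimage_smul_set, ← Set.preimage_iUnion₂, hR, Set.preimage_univ]
  exact ⟨fun s => f ⁻¹' P s, fun t => f ⁻¹' Q t,
    fun s hs s' hs' hne => (hP s hs s' hs' hne).preimage f,
    fun t ht t' ht' hne => (hQ t ht t' ht' hne).preimage f,
    fun s hs t ht => (hPQ s hs t ht).preimage f,
    preimage_cover S1 P hPcover, preimage_cover S2 Q hQcover⟩

namespace MulAction

variable {G X : Type*} [Group G] [MulAction G X]

theorem exists_smul_orbitRel_out_eq (x : X) :
    ∃ g : G, g • (Quotient.mk (orbitRel G X) x).out = x :=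
  mem_orbit_symm.mp (orbitRel_apply.mp (Quotient.mk_out x))

theorem eq_of_smul_eq_smul_of_free (hfree : ∀ (g : G) (x : X), g • x = x → g = 1)
    {g h : G} {x : X} (hgh : g • x = h • x) : g = h := by
  have : (h⁻¹ * g) • x = x := by rw [mul_smul, hgh, inv_smul_smul]
  exact (inv_mul_eq_one.mp (hfree _ _ this)).symm

theorem nonempty_mulActionHom_self_of_free (hfree : ∀ (g : G) (x : X), g • x = x → g = 1) :
    Nonempty (X →[G] G) := by
  choose γ hγ using exists_smul_orbitRel_out_eq (G := G) (X := X)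
  refine ⟨⟨γ, fun g x =>
    eq_of_smul_eq_smul_of_free hfree (x := (Quotient.mk (orbitRel G X) (g • x)).out) ?_⟩⟩
  have same_orbit : Quotient.mk (orbitRel G X) (g • x) = Quotient.mk _ x :=
    Quotient.sound (mem_orbit x g)
  rw [hγ, id, smul_eq_mul, mul_smul, same_orbit, hγ]

end MulAction

/-- If `G` acts freely on `X` and `G` has a paradoxical decomposition with translating
sets `S1, S2`, then so does the action `G ↷ X`. -/
theorem stmt0 {G X : Type*} [Group G] [MulAction G X]
    (hfree : ∀ (g : G) (x : X), g • x = x → g = 1)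
    (S1 S2 : Finset G) (h : IsParaDecomp G G S1 S2) :
    IsParaDecomp G X S1 S2 :=
  (MulAction.nonempty_mulActionHom_self_of_free hfree).elim h.comap
end

section
/- If the free group F = ⟨x, y⟩ of rank 2 acts freely on a set X, then X has a paradoxical decomposition with translating sets {1, x} and {1, y}. -/
open Pointwise

/-- The Tarski number of the action of `G` on `X`: the minimal `|S1| + |S2|` over all
paradoxical decompositions, `⊤` if none exists. -/
noncomputable def TarskiNumber (G X : Type*) [Group G] [MulAction G X] : ℕ∞ :=
  sInf {n : ℕ∞ | ∃ S1 S2 : Finset G, IsParaDecomp G X S1 S2 ∧ n = S1.card + S2.card}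

/-!
A free action admits a `G`-equivariant map `X → G`: send a point to the group element carrying
its orbit representative to it. Paradoxical decompositions pull back along equivariant maps,
so it suffices to decompose `F` acting on itself. There, writing `W(w)` for the reduced words
with first letter `w`, every word either lies in `W(x)` or is `x` times a word in `W(x⁻¹)`,
so `F = W(x) ∪ x • W(x⁻¹)` and likewise `F = W(y) ∪ y • W(y⁻¹)`, with the four pieces
pairwise disjoint.
-/

namespace MulAction

variable {G X : Type*} [Group G] [MulAction G X]

lemma exists_smul_out_eq (p : X) : ∃ g : G, g • (⟦p⟧ : orbitRel.Quotient G X).out = p := by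
  obtain ⟨g, hg⟩ := Quotient.mk_out (s := orbitRel G X) p
  exact ⟨g⁻¹, by rw [← hg, inv_smul_smul]⟩

end MulAction

namespace FreeGroup

variable {α : Type*} [DecidableEq α]

theorem startsWith_union_smul_startsWith (a : α) :
    startsWith (a, true) ∪ of a • startsWith (a, false) = Set.univ := by
  refine Set.eq_univ_of_forall fun g => ?_
  by_cases hg : g ∈ startsWith (a, true)
  · exact Or.inl hg
  · exact Or.inr <| Set.mem_smul_set_iff_inv_smul_mem.mpr <|
      startsWith_mk_mul (w := (a, false)) g hg

/-- In `startsWith`, the letter `(a, true)` is `a` and `(a, false)` is `a⁻¹`; the piece for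
`1` is `W(a)` and the piece for `of a` is `W(a⁻¹)`. -/
theorem isParaDecomp_self {a b : α} (hab : a ≠ b) :
    IsParaDecomp (FreeGroup α) (FreeGroup α) {1, of a} {1, of b} := by
  refine ⟨fun s => startsWith (a, decide (s = 1)), fun t => startsWith (b, decide (t = 1)),
    ?_, ?_, ?_, ?_, ?_⟩
  · intro s hs s' hs' hne
    simp only [Finset.mem_insert, Finset.mem_singleton] at hs hs'
    rcases hs with rfl | rfl <;> rcases hs' with rfl | rfl <;> simp_all [of_ne_one]
  · intro t ht t' ht' hne
    simp only [Finset.mem_insert, Finset.mem_singleton] at ht ht'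
    rcases ht with rfl | rfl <;> rcases ht' with rfl | rfl <;> simp_all [of_ne_one]
  · intro s _ t _
    simp [hab]
  · simpa [of_ne_one] using startsWith_union_smul_startsWith a
  · simpa [of_ne_one] using startsWith_union_smul_startsWith b

end FreeGroup

/-- If the free group `F = ⟨x, y⟩` of rank 2 acts freely on `X`, then `X` has a
paradoxical decomposition with translating sets `{1, x}` and `{1, y}`. -/
theorem stmt1 {X : Type*} [MulAction (FreeGroup (Fin 2)) X]
    (hfree : ∀ (g : FreeGroup (Fin 2)) (x : X), g • x = x → g = 1) :
    IsParaDecomp (FreeGroup (Fin 2)) X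
      ({1, FreeGroup.of 0} : Finset (FreeGroup (Fin 2)))
      ({1, FreeGroup.of 1} : Finset (FreeGroup (Fin 2))) :=
  (FreeGroup.isParaDecomp_self (by decide)).comap
    (MulAction.nonempty_mulActionHom_self_of_free hfree).some
end

section
/- Let H be a normal subgroup of G. If the action of G on the coset space G/H has a paradoxical decomposition, then the quotient group G/H has a paradoxical decomposition (i.e., G/H is a paradoxical group). -/
open Pointwise

/-!
A paradoxical decomposition is pushed along any map `f : G → K` whose translations act on `X`
as those of `G` do (`f g • x = g • x`): the pieces whose translating elements have the same image
under `f` are merged into one piece. For `G ↷ G ⧸ H` and `f = QuotientGroup.mk` this is the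
regular action of `G ⧸ H`.
-/

section PushForward

variable {G K X : Type*}

def fiberUnion (f : G → K) (S : Finset G) (P : G → Set X) (k : K) : Set X :=
  ⋃ s ∈ S, ⋃ (_ : f s = k), P s

lemma subset_fiberUnion {f : G → K} {S : Finset G} {P : G → Set X} {s : G} (hs : s ∈ S) :
    P s ⊆ fiberUnion f S P (f s) := fun x hx => by
  simp only [fiberUnion, Set.mem_iUnion]
  exact ⟨s, hs, rfl, hx⟩

lemma disjoint_fiberUnion {f : G → K} {S T : Finset G} {P Q : G → Set X} {k k' : K}
    (h : ∀ s ∈ S, ∀ t ∈ T, f s = k → f t = k' → Disjoint (P s) (Q t)) :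
    Disjoint (fiberUnion f S P k) (fiberUnion f T Q k') := by
  simp only [fiberUnion, Set.disjoint_iUnion_left, Set.disjoint_iUnion_right]
  exact fun t ht htk s hs hsk => h s hs t ht hsk htk

lemma pairwiseDisjoint_fiberUnion {f : G → K} {S : Finset G} {P : G → Set X}
    (hP : ∀ s ∈ S, ∀ s' ∈ S, s ≠ s' → Disjoint (P s) (P s')) {k k' : K} (hk : k ≠ k') :
    Disjoint (fiberUnion f S P k) (fiberUnion f S P k') :=
  disjoint_fiberUnion fun s hs s' hs' hsk hsk' =>
    hP s hs s' hs' fun hss' => hk (hsk ▸ hsk' ▸ congrArg f hss')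

lemma iUnion_smul_fiberUnion_eq_univ [SMul G X] [SMul K X] [DecidableEq K] {f : G → K}
    (hf : ∀ g (x : X), f g • x = g • x) {S : Finset G} {P : G → Set X}
    (hP : ⋃ s ∈ S, s • P s = Set.univ) :
    ⋃ k ∈ S.image f, k • fiberUnion f S P k = Set.univ := by
  refine Set.eq_univ_of_univ_subset (hP ▸ Set.iUnion₂_subset fun s hs => ?_)
  rw [show s • P s = f s • P s by simp only [← Set.image_smul, hf]]
  exact (Set.smul_set_mono (subset_fiberUnion hs)).trans
    (Set.subset_biUnion_of_mem (u := fun k => k • fiberUnion f S P k)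
      (Finset.mem_image_of_mem f hs))

theorem IsParaDecomp.pushForward [Group G] [Group K] [MulAction G X] [MulAction K X]
    [DecidableEq K] {S1 S2 : Finset G}
    (h : IsParaDecomp G X S1 S2) (f : G → K) (hf : ∀ g (x : X), f g • x = g • x) :
    IsParaDecomp K X (S1.image f) (S2.image f) := by
  obtain ⟨P, Q, hP, hQ, hPQ, hPcover, hQcover⟩ := h
  exact ⟨fiberUnion f S1 P, fiberUnion f S2 Q,
    fun _ _ _ _ => pairwiseDisjoint_fiberUnion hP,
    fun _ _ _ _ => pairwiseDisjoint_fiberUnion hQ,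
    fun _ _ _ _ => disjoint_fiberUnion fun s hs t ht _ _ => hPQ s hs t ht,
    iUnion_smul_fiberUnion_eq_univ hf hPcover,
    iUnion_smul_fiberUnion_eq_univ hf hQcover⟩

end PushForward

/-- If `H ⊴ G` and the action of `G` on `G/H` is paradoxical, then the quotient group
`G/H` is a paradoxical group. -/
theorem stmt5 {G : Type*} [Group G] (H : Subgroup G) [H.Normal]
    (h : ∃ S1 S2 : Finset G, IsParaDecomp G (G ⧸ H) S1 S2) :
    ∃ T1 T2 : Finset (G ⧸ H), IsParaDecomp (G ⧸ H) (G ⧸ H) T1 T2 := by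
  classical
  obtain ⟨S1, S2, hS⟩ := h
  exact ⟨_, _, hS.pushForward QuotientGroup.mk fun _ _ => rfl⟩
end

section
/- A group action G ↷ X has a paradoxical decomposition with translating sets S1, S2 if and only if every orbit of the action has a paradoxical decomposition (for the restricted action of G) with translating sets S1, S2. -/
open Pointwise

/-- A paradoxical decomposition of the action of `G` restricted to a `G`-invariant
subset `Y ⊆ X`, with translating sets `S1`, `S2`. -/
def IsParaDecompOn (G X : Type*) [Group G] [MulAction G X] (Y : Set X)
    (S1 S2 : Finset G) : Prop :=
  ∃ P Q : G → Set X,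
    (∀ s ∈ S1, P s ⊆ Y) ∧ (∀ t ∈ S2, Q t ⊆ Y) ∧
    (∀ s ∈ S1, ∀ s' ∈ S1, s ≠ s' → Disjoint (P s) (P s')) ∧
    (∀ t ∈ S2, ∀ t' ∈ S2, t ≠ t' → Disjoint (Q t) (Q t')) ∧
    (∀ s ∈ S1, ∀ t ∈ S2, Disjoint (P s) (Q t)) ∧
    (⋃ s ∈ S1, s • P s) = Y ∧
    (⋃ t ∈ S2, t • Q t) = Y

/-!
A decomposition of `X` restricts to every `G`-invariant set, in particular to every orbit,
because translation commutes with intersecting with an invariant set. Conversely, decompositions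
of the orbits glue along the partition of `X` into orbits: pieces lying in different orbits are
automatically disjoint, and the translates of the glued pieces cover every orbit.
-/

open Function

namespace Set

theorem disjoint_iUnion_of_pairwise_disjoint {α ι : Type*} {Y A B : ι → Set α}
    (hY : Pairwise (Disjoint on Y)) (hA : ∀ i, A i ⊆ Y i) (hB : ∀ i, B i ⊆ Y i)
    (hAB : ∀ i, Disjoint (A i) (B i)) : Disjoint (⋃ i, A i) (⋃ i, B i) := by
  refine disjoint_iUnion_left.2 fun i => disjoint_iUnion_right.2 fun j => ?_
  rcases eq_or_ne i j with rfl | hij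
  · exact hAB i
  · exact (hY hij).mono (hA i) (hB j)

end Set

section ParadoxicalDecomposition

variable {G X : Type*} [Group G] [MulAction G X] {S : Finset G}

theorem iUnion_smul_inter_of_smul_eq (P : G → Set X) {Y : Set X} (hY : ∀ g : G, g • Y = Y) :
    ⋃ s ∈ S, s • (P s ∩ Y) = (⋃ s ∈ S, s • P s) ∩ Y := by
  simp only [Set.smul_set_inter, hY, Set.iUnion₂_inter]

theorem iUnion_smul_iUnion_comm {ι : Type*} (P : ι → G → Set X) :
    ⋃ s ∈ S, s • ⋃ i, P i s = ⋃ i, ⋃ s ∈ S, s • P i s := by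
  simp only [Set.smul_set_iUnion]
  rw [Set.iUnion_comm]
  exact Set.iUnion_congr fun s => Set.iUnion_comm _

open MulAction in
theorem MulAction.orbitRel.Quotient.pairwise_disjoint_orbit :
    Pairwise (Disjoint on (orbitRel.Quotient.orbit : orbitRel.Quotient G X → Set X)) := by
  intro x y hxy
  refine Set.disjoint_left.2 fun a hx hy => hxy ?_
  rw [← orbitRel.Quotient.mem_orbit.1 hx, orbitRel.Quotient.mem_orbit.1 hy]

variable {S1 S2 : Finset G}

theorem IsParaDecomp.isParaDecompOn {Y : Set X} (h : IsParaDecomp G X S1 S2)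
    (hY : ∀ g : G, g • Y = Y) : IsParaDecompOn G X Y S1 S2 := by
  obtain ⟨P, Q, hPP, hQQ, hPQ, hP, hQ⟩ := h
  have restrict {A B : Set X} (hAB : Disjoint A B) : Disjoint (A ∩ Y) (B ∩ Y) :=
    hAB.mono Set.inter_subset_left Set.inter_subset_left
  refine ⟨fun s => P s ∩ Y, fun t => Q t ∩ Y, fun _ _ => Set.inter_subset_right,
    fun _ _ => Set.inter_subset_right, fun s hs s' hs' hne => restrict (hPP s hs s' hs' hne),
    fun t ht t' ht' hne => restrict (hQQ t ht t' ht' hne),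
    fun s hs t ht => restrict (hPQ s hs t ht), ?_, ?_⟩
  · rw [iUnion_smul_inter_of_smul_eq P hY, hP, Set.univ_inter]
  · rw [iUnion_smul_inter_of_smul_eq Q hY, hQ, Set.univ_inter]

theorem isParaDecomp_of_forall_isParaDecompOn {ι : Type*} {Y : ι → Set X}
    (hY : Pairwise (Disjoint on Y)) (hcover : ⋃ i, Y i = Set.univ)
    (h : ∀ i, IsParaDecompOn G X (Y i) S1 S2) : IsParaDecomp G X S1 S2 := by
  choose P Q hPY hQY hPP hQQ hPQ hP hQ using h
  refine ⟨fun s => ⋃ i, P i s, fun t => ⋃ i, Q i t,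
    fun s hs s' hs' hne => Set.disjoint_iUnion_of_pairwise_disjoint hY
      (fun i => hPY i s hs) (fun i => hPY i s' hs') fun i => hPP i s hs s' hs' hne,
    fun t ht t' ht' hne => Set.disjoint_iUnion_of_pairwise_disjoint hY
      (fun i => hQY i t ht) (fun i => hQY i t' ht') fun i => hQQ i t ht t' ht' hne,
    fun s hs t ht => Set.disjoint_iUnion_of_pairwise_disjoint hY
      (fun i => hPY i s hs) (fun i => hQY i t ht) fun i => hPQ i s hs t ht, ?_, ?_⟩
  · rw [iUnion_smul_iUnion_comm, ← hcover]
    exact Set.iUnion_congr hP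
  · rw [iUnion_smul_iUnion_comm, ← hcover]
    exact Set.iUnion_congr hQ

end ParadoxicalDecomposition

/-- `G ↷ X` has a paradoxical decomposition with translating sets `S1, S2` iff every
orbit of the action has one with the same translating sets. -/
theorem stmt7 {G X : Type*} [Group G] [MulAction G X] (S1 S2 : Finset G) :
    IsParaDecomp G X S1 S2 ↔
      ∀ x : X, IsParaDecompOn G X (MulAction.orbit G x) S1 S2 := by
  refine ⟨fun h x => h.isParaDecompOn (MulAction.smul_orbit · x), fun h => ?_⟩
  refine isParaDecomp_of_forall_isParaDecompOn
    MulAction.orbitRel.Quotient.pairwise_disjoint_orbit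
    (MulAction.univ_eq_iUnion_orbit G X).symm fun c => ?_
  rw [MulAction.orbitRel.Quotient.orbit_eq_orbit_out c Quotient.out_eq']
  exact h c.out
end

section
/- Let G ↷ X be a group action and S1, S2 finite subsets of G. If G ↷ X has a paradoxical decomposition with translating sets S1, S2, then for any pair of finite subsets A1, A2 ⊆ X one has |A1·S1^{-1} ∪ A2·S2^{-1}| ≥ |A1| + |A2|. -/
/-!
Each of the two coverings `X = ⋃ s • P s` yields an injection `a ↦ s⁻¹ • a` of `X` into
`⋃ P s`, where `s` is chosen with `a ∈ s • P s`; it is injective because the pieces are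
disjoint. The images of `A1` and `A2` under the two injections lie in the disjoint sets
`⋃ P s` and `⋃ Q t`, hence are disjoint, and they lie in `A1·S1⁻¹` and `A2·S2⁻¹`.
-/

open Pointwise

section

variable {G X : Type*} [Group G] [MulAction G X]

theorem exists_injective_inv_smul_of_iUnion_smul_eq_univ {S : Finset G} {P : G → Set X}
    (hP : (S : Set G).PairwiseDisjoint P) (hU : ⋃ s ∈ S, s • P s = Set.univ) :
    ∃ f : X → X, f.Injective ∧ (∀ a, ∃ s ∈ S, f a = s⁻¹ • a) ∧
      Set.range f ⊆ ⋃ s ∈ S, P s := by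
  have hcover : ∀ a : X, ∃ s ∈ S, s⁻¹ • a ∈ P s := fun a => by
    simpa [Set.mem_smul_set_iff_inv_smul_mem] using hU.ge (Set.mem_univ a)
  choose σ hσS hσ using hcover
  refine ⟨fun a => (σ a)⁻¹ • a, fun a b hab => ?_, fun a => ⟨σ a, hσS a, rfl⟩, ?_⟩
  · have hσab : σ a = σ b := by
      by_contra hne
      have hb : (σ a)⁻¹ • a ∈ P (σ b) := by simpa only [hab] using hσ b
      exact Set.disjoint_left.mp (hP (hσS a) (hσS b) hne) (hσ a) hb
    simp only [hσab] at hab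
    exact smul_left_cancel _ hab
  · rintro _ ⟨a, rfl⟩
    exact Set.mem_biUnion (hσS a) (hσ a)

theorem Finset.image_subset_biUnion_image_inv_smul [DecidableEq X] {S : Finset G}
    {f : X → X} (hf : ∀ a, ∃ s ∈ S, f a = s⁻¹ • a) (A : Finset X) :
    A.image f ⊆ S.biUnion fun s => A.image fun a => s⁻¹ • a := by
  intro x hx
  obtain ⟨a, ha, rfl⟩ := Finset.mem_image.mp hx
  obtain ⟨s, hs, hfa⟩ := hf a
  exact Finset.mem_biUnion.mpr ⟨s, hs, Finset.mem_image.mpr ⟨a, ha, hfa.symm⟩⟩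

end

/-- If `G ↷ X` has a paradoxical decomposition with translating sets `S1, S2`, then for
all finite `A1, A2 ⊆ X` one has `|A1·S1⁻¹ ∪ A2·S2⁻¹| ≥ |A1| + |A2|` (in the
left-action mirror, `A·S⁻¹` is `{s⁻¹ • a : s ∈ S, a ∈ A}`). -/
theorem stmt9 {G X : Type*} [Group G] [MulAction G X] [DecidableEq X]
    (S1 S2 : Finset G) (h : IsParaDecomp G X S1 S2) (A1 A2 : Finset X) :
    A1.card + A2.card ≤
      ((S1.biUnion fun s => A1.image fun a => s⁻¹ • a) ∪
        (S2.biUnion fun t => A2.image fun a => t⁻¹ • a)).card := by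
  obtain ⟨P, Q, hP, hQ, hPQ, hU1, hU2⟩ := h
  obtain ⟨f1, hf1, hf1S, hf1P⟩ := exists_injective_inv_smul_of_iUnion_smul_eq_univ hP hU1
  obtain ⟨f2, hf2, hf2S, hf2Q⟩ := exists_injective_inv_smul_of_iUnion_smul_eq_univ hQ hU2
  have hdisj : Disjoint (A1.image f1) (A2.image f2) := by
    rw [← Finset.disjoint_coe, Finset.coe_image, Finset.coe_image]
    refine Disjoint.mono ((Set.image_subset_range _ _).trans hf1P)
      ((Set.image_subset_range _ _).trans hf2Q) ?_
    exact Set.disjoint_iUnion₂_left.mpr fun s hs =>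
      Set.disjoint_iUnion₂_right.mpr fun t ht => hPQ s hs t ht
  calc A1.card + A2.card = (A1.image f1 ∪ A2.image f2).card := by
        rw [Finset.card_union_of_disjoint hdisj, Finset.card_image_of_injective _ hf1,
          Finset.card_image_of_injective _ hf2]
    _ ≤ _ := Finset.card_le_card <| Finset.union_subset_union
        (Finset.image_subset_biUnion_image_inv_smul hf1S A1)
        (Finset.image_subset_biUnion_image_inv_smul hf2S A2)
end

section
/- Let F = ⟨x_1, x_2⟩ be a free group of rank 2 acting on a set X such that the action is the disjoint union of F-invariant sets Y_1, ..., Y_n, and suppose there is a partition index function such that for each j, some rank-2 free subgroup ⟨a, b_j⟩ ≤ F (with a fixed and b_j depending on j) acts freely on Y_j. Then the action of the subgroup ⟨a, b_1, ..., b_n⟩ on X has a paradoxical decomposition with translating sets {1, a} and {1, b_1, ..., b_n}; in particular its Tarski number is at most n + 3. -/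
/-! Since `⟨a, b_j⟩` is free on `a, b_j` and acts freely on `Y_j`, choosing a
representative of each `⟨a, b_j⟩`-orbit identifies the orbit with `F(a, b_j)`, so every point
`x ∈ Y_j` gets a reduced word `W x`, with `W (w • x) = w * W x`. Now play ping-pong with the
first letter of `W x`: if `W x` does not start with `a`, then `W (a⁻¹ • x)` starts with `a⁻¹`.
Hence the points whose word starts with `a`, together with `a •` (those starting with `a⁻¹`),
cover `X`; likewise for the letters `b_j`, where a point of `Y_j` is translated back by `b_j`.
The translations all lie in `⟨a, b_1, …, b_n⟩`, so the same pieces work for that subgroup. -/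

open Pointwise

open Set

namespace FreeGroup

theorem toWord_inv_of_mul_head? {α : Type*} [DecidableEq α] {c : α} {w : FreeGroup α}
    (hw : w.toWord.head? ≠ some (c, true)) :
    ((of c)⁻¹ * w).toWord.head? = some (c, false) := by
  rw [toWord_mul, toWord_inv, toWord_of]
  change (reduce ((c, false) :: w.toWord)).head? = _
  rw [reduce.cons, reduce_toWord]
  cases hcons : w.toWord with
  | nil => rfl
  | cons d w' =>
    obtain ⟨d, _ | _⟩ := d
    · simp
    · rw [hcons] at hw
      simp [Ne.symm (by simpa using hw)]

theorem map_mem_closure_pair {G : Type*} [Group G] (φ : FreeGroup Bool →* G)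
    (u : FreeGroup Bool) : φ u ∈ Subgroup.closure {φ (of false), φ (of true)} :=
  range_lift_le (f := fun c => φ (of c))
    (by rintro _ ⟨_ | _, rfl⟩ <;> exact Subgroup.subset_closure (by simp))
    ⟨u, (lift_unique φ fun _ => rfl).symm⟩

end FreeGroup

section letterPiece

variable {G X α : Type*} [Group G] [DecidableEq α] (W : X → FreeGroup α) (c : α) (g : X → G)

-- Ping-pong pieces for the letter `c`; `g x` is the translation assigned to a point `x`
-- whose word starts with `c⁻¹`.
def letterPiece (t : G) : Set X :=
  {x | (W x).toWord.head? = some (c, true) ∧ t = 1 ∨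
    (W x).toWord.head? = some (c, false) ∧ g x = t}

theorem letterPiece_subset (t : G) :
    letterPiece W c g t ⊆ {x | ∃ β, (W x).toWord.head? = some (c, β)} := by
  rintro x (⟨hx, -⟩ | ⟨hx, -⟩) <;> exact ⟨_, hx⟩

theorem disjoint_letterPiece_of_ne {c' : α} (hc : c ≠ c') (g' : X → G) (t t' : G) :
    Disjoint (letterPiece W c g t) (letterPiece W c' g' t') := by
  refine Set.disjoint_left.2 fun x hx hx' => ?_
  obtain ⟨β, hβ⟩ := letterPiece_subset W c g t hx
  obtain ⟨β', hβ'⟩ := letterPiece_subset W c' g' t' hx'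
  rw [hβ] at hβ'
  exact hc (Prod.ext_iff.1 (Option.some_injective _ hβ')).1

theorem disjoint_letterPiece {t t' : G} (h : t ≠ t') :
    Disjoint (letterPiece W c g t) (letterPiece W c g t') := by
  refine Set.disjoint_left.2 fun x hx hx' => ?_
  rcases hx with ⟨hx, rfl⟩ | ⟨hx, rfl⟩ <;> rcases hx' with ⟨hx', rfl⟩ | ⟨hx', rfl⟩
  all_goals first | exact h rfl | simp_all

theorem iUnion_smul_letterPiece [MulAction G X] [DecidableEq G] (S : Finset G)
    (hS : ∀ x, g x ∈ S)
    (hW : ∀ x, W ((g x)⁻¹ • x) = (FreeGroup.of c)⁻¹ * W x)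
    (hg : ∀ x, g ((g x)⁻¹ • x) = g x) :
    ⋃ t ∈ insert 1 S, t • letterPiece W c g t = univ := by
  refine eq_univ_of_forall fun x => mem_iUnion₂.2 ?_
  by_cases hx : (W x).toWord.head? = some (c, true)
  · exact ⟨1, Finset.mem_insert_self 1 S, by simpa [letterPiece] using Or.inl hx⟩
  · refine ⟨g x, Finset.mem_insert_of_mem (hS x),
      mem_smul_set.2 ⟨(g x)⁻¹ • x, Or.inr ⟨?_, hg x⟩, smul_inv_smul _ _⟩⟩
    rw [hW, FreeGroup.toWord_inv_of_mul_head? hx]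

end letterPiece

section
variable {G X : Type*} [Group G] [MulAction G X]

theorem exists_smul_invariant_index {ι : Type*} (K : Subgroup G) (Y : ι → Set X)
    (hcover : ∀ x, ∃ j, x ∈ Y j) (hinv : ∀ j, ∀ g ∈ K, ∀ x ∈ Y j, g • x ∈ Y j) :
    ∃ J : X → ι, (∀ x, x ∈ Y (J x)) ∧ ∀ g ∈ K, ∀ x, J (g • x) = J x := by
  have hmem : ∀ g ∈ K, ∀ x, (fun j => g • x ∈ Y j) = fun j => x ∈ Y j := fun g hg x =>
    funext fun j => propext ⟨fun h => by simpa using hinv j g⁻¹ (K.inv_mem hg) _ h,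
      hinv j g hg x⟩
  -- The chosen index depends only on `{j | x ∈ Y j}`, which is constant on `K`-orbits.
  refine ⟨fun x => (hcover x).choose, fun x => (hcover x).choose_spec, fun g hg x => ?_⟩
  dsimp only
  congr 1
  exact hmem g hg x

theorem exists_equivariant_coordinate_of_free {H : Type*} [Group H] [MulAction H X]
    (Y : Set X)
    (hfree : ∀ h : H, ∀ x ∈ Y, h • x = x → h = 1) :
    ∃ U : X → H, ∀ h, ∀ x ∈ Y, U (h • x) = h * U x := by
  -- `U x` is defined by `x = U x • r x`, where `r x` represents the orbit of `x`.
  let r : X → X := fun x => (Quotient.mk (MulAction.orbitRel H X) x).out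
  have hr : ∀ x, ∃ h : H, h • r x = x := fun x => by
    obtain ⟨g, hg⟩ :=
      MulAction.orbitRel_apply.1 (Quotient.mk_out (s := MulAction.orbitRel H X) x)
    exact ⟨g⁻¹, inv_smul_eq_iff.2 hg.symm⟩
  choose U hU using hr
  refine ⟨U, fun h x hx => ?_⟩
  have hrx : r (h • x) = r x :=
    congrArg Quotient.out (Quotient.sound (MulAction.orbitRel_apply.2 (MulAction.mem_orbit x h)))
  have hback : (U (h • x))⁻¹ • h • x = r x := by
    rw [inv_smul_eq_iff, ← hrx, hU]
  have hfix : (U x * (U (h • x))⁻¹ * h) • x = x := by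
    rw [mul_smul, mul_smul, hback, hU]
  have := hfree _ x hx hfix
  rw [mul_assoc, mul_eq_one_iff_inv_eq, eq_comm, inv_mul_eq_iff_eq_mul,
    eq_mul_inv_iff_mul_eq] at this
  exact this.symm

theorem exists_equivariant_coordinate_of_hom {F : Type*} [Group F] (φ : F →* G) (Y : Set X)
    (hfree : ∀ v, ∀ x ∈ Y, φ v • x = x → v = 1) :
    ∃ U : X → F, ∀ v, ∀ x ∈ Y, U (φ v • x) = v * U x := by
  let := MulAction.compHom X φ
  exact exists_equivariant_coordinate_of_free Y hfree

theorem IsParaDecomp.of_subgroup [DecidableEq G] {K : Subgroup G} {S1 S2 : Finset K}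
    (h : IsParaDecomp G X (S1.image Subtype.val) (S2.image Subtype.val)) :
    IsParaDecomp K X S1 S2 := by
  obtain ⟨P, Q, hP, hQ, hPQ, hPU, hQU⟩ := h
  refine ⟨fun k => P k, fun k => Q k,
    fun s hs s' hs' hne => hP _ (Finset.mem_image_of_mem _ hs) _ (Finset.mem_image_of_mem _ hs')
      (Subtype.coe_injective.ne hne),
    fun t ht t' ht' hne => hQ _ (Finset.mem_image_of_mem _ ht) _ (Finset.mem_image_of_mem _ ht')
      (Subtype.coe_injective.ne hne),
    fun s hs t ht => hPQ _ (Finset.mem_image_of_mem _ hs) _ (Finset.mem_image_of_mem _ ht),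
    ?_, ?_⟩
  · rw [← hPU, Finset.set_biUnion_finset_image]; rfl
  · rw [← hQU, Finset.set_biUnion_finset_image]; rfl

theorem IsParaDecomp.tarskiNumber_le {S1 S2 : Finset G} (h : IsParaDecomp G X S1 S2) :
    TarskiNumber G X ≤ S1.card + S2.card :=
  sInf_le ⟨S1, S2, h, rfl⟩

theorem isParaDecomp_of_free_on_pieces [DecidableEq G] {ι : Type*} [Fintype ι] (a : G)
    (b : ι → G) (Y : ι → Set X) (hcover : (⋃ j, Y j) = univ)
    (hinv : ∀ j, ∀ g ∈ Subgroup.closure ({a} ∪ range b), ∀ x ∈ Y j, g • x ∈ Y j)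
    (hfreegen : ∀ j, ∃ φ : FreeGroup Bool →* G,
      Function.Injective φ ∧ φ (FreeGroup.of false) = a ∧ φ (FreeGroup.of true) = b j)
    (hfreeact : ∀ j, ∀ w ∈ Subgroup.closure {a, b j}, ∀ x ∈ Y j, w • x = x → w = 1) :
    IsParaDecomp G X {1, a} (insert 1 (Finset.univ.image b)) := by
  obtain ⟨J, hJY, hJ⟩ := exists_smul_invariant_index _ Y (iUnion_eq_univ_iff.1 hcover) hinv
  choose φ hφinj hφa hφb using hfreegen
  have hφ : ∀ j v, φ j v ∈ Subgroup.closure {a, b j} := fun j v => by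
    simpa only [hφa, hφb] using FreeGroup.map_mem_closure_pair (φ j) v
  have hφK : ∀ j v, φ j v ∈ Subgroup.closure ({a} ∪ range b) := fun j v =>
    Subgroup.closure_mono (by rintro _ (rfl | rfl) <;> simp) (hφ j v)
  have hfree : ∀ j v, ∀ x ∈ Y j, φ j v • x = x → v = 1 := fun j v x hx hfix =>
    hφinj j (by rw [map_one]; exact hfreeact j _ (hφ j v) x hx hfix)
  choose U hU using fun j => exists_equivariant_coordinate_of_hom (φ j) (Y j) (hfree j)
  set W : X → FreeGroup Bool := fun x => U (J x) x
  have hW : ∀ x v, W (φ (J x) v • x) = v * W x := fun x v => by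
    simp only [W, hJ _ (hφK _ v)]
    exact hU _ v x (hJY x)
  refine ⟨letterPiece W false (fun _ => a), letterPiece W true (fun x => b (J x)),
    fun _ _ _ _ => disjoint_letterPiece _ _ _, fun _ _ _ _ => disjoint_letterPiece _ _ _,
    fun _ _ _ _ => disjoint_letterPiece_of_ne _ _ _ Bool.false_ne_true _ _ _,
    iUnion_smul_letterPiece _ _ _ _ (fun _ => Finset.mem_singleton_self a) (fun x => ?_)
      (fun _ => rfl),
    iUnion_smul_letterPiece _ _ _ _ (fun x => Finset.mem_image_of_mem _ (Finset.mem_univ _))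
      (fun x => ?_) (fun x => ?_)⟩
  · rw [← hφa (J x), ← map_inv, hW]
  · rw [← hφb (J x), ← map_inv, hW]
  · exact congrArg b (hJ _ (inv_mem (Subgroup.subset_closure (Or.inr ⟨_, rfl⟩))) x)

end

theorem stmt16_general {X : Type*} [MulAction (FreeGroup (Fin 2)) X] (n : ℕ)
    (a : FreeGroup (Fin 2)) (b : Fin n → FreeGroup (Fin 2))
    (Y : Fin n → Set X)
    (hcover : (⋃ j, Y j) = Set.univ)
    (hinv : ∀ (j : Fin n), ∀ g ∈ Subgroup.closure ({a} ∪ Set.range b),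
      ∀ x ∈ Y j, g • x ∈ Y j)
    (hfreegen : ∀ j : Fin n, ∃ φ : FreeGroup Bool →* FreeGroup (Fin 2),
      Function.Injective φ ∧ φ (FreeGroup.of false) = a ∧ φ (FreeGroup.of true) = b j)
    (hfreeact : ∀ j : Fin n, ∀ w ∈ Subgroup.closure {a, b j},
      ∀ x ∈ Y j, w • x = x → w = 1) :
    IsParaDecomp (FreeGroup (Fin 2)) X ({1, a} : Finset (FreeGroup (Fin 2)))
        (insert 1 (Finset.image b Finset.univ)) ∧
      TarskiNumber (Subgroup.closure ({a} ∪ Set.range b)) X ≤ (n + 3 : ℕ∞) := by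
  have hF := isParaDecomp_of_free_on_pieces a b Y hcover hinv hfreegen hfreeact
  refine ⟨hF, ?_⟩
  set K := Subgroup.closure ({a} ∪ Set.range b)
  let a' : K := ⟨a, Subgroup.subset_closure (Or.inl rfl)⟩
  let b' : Fin n → K := fun j => ⟨b j, Subgroup.subset_closure (Or.inr ⟨j, rfl⟩)⟩
  have hK : IsParaDecomp K X {1, a'} (insert 1 (Finset.univ.image b')) :=
    IsParaDecomp.of_subgroup (by
      simp only [Finset.image_insert, Finset.image_singleton, Finset.image_image,
        OneMemClass.coe_one]
      exact hF)
  have hcard : ({1, a'} : Finset K).card + (insert 1 (Finset.univ.image b')).card ≤ n + 3 := by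
    have := Finset.card_insert_le (1 : K) (Finset.univ.image b')
    have := (Finset.card_image_le (s := Finset.univ) (f := b')).trans_eq (Finset.card_fin n)
    have := Finset.card_le_two (a := (1 : K)) (b := a')
    omega
  calc TarskiNumber K X ≤ _ := hK.tarskiNumber_le
    _ ≤ (n + 3 : ℕ) := by exact_mod_cast hcard
    _ = n + 3 := by push_cast; rfl

/-- Suppose the free group `F` of rank 2 acts on `X`, `X` is partitioned into sets
`Y_1, …, Y_n` invariant under the subgroup `K = ⟨a, b_1, …, b_n⟩`, and for each `j` the
elements `a, b_j` freely generate a rank-2 free subgroup which acts freely on `Y_j`.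
Then `K ↷ X` has a paradoxical decomposition with translating sets `{1, a}` and
`{1, b_1, …, b_n}`; in particular the Tarski number of `K ↷ X` is at most `n + 3`. -/
theorem stmt16 {X : Type*} [MulAction (FreeGroup (Fin 2)) X] (n : ℕ)
    (a : FreeGroup (Fin 2)) (b : Fin n → FreeGroup (Fin 2))
    (Y : Fin n → Set X)
    (hdisj : ∀ i j, i ≠ j → Disjoint (Y i) (Y j))
    (hcover : (⋃ j, Y j) = Set.univ)
    (hinv : ∀ (j : Fin n), ∀ g ∈ Subgroup.closure ({a} ∪ Set.range b),
      ∀ x ∈ Y j, g • x ∈ Y j)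
    (hfreegen : ∀ j : Fin n, ∃ φ : FreeGroup Bool →* FreeGroup (Fin 2),
      Function.Injective φ ∧ φ (FreeGroup.of false) = a ∧ φ (FreeGroup.of true) = b j)
    (hfreeact : ∀ j : Fin n, ∀ w ∈ Subgroup.closure {a, b j},
      ∀ x ∈ Y j, w • x = x → w = 1) :
    IsParaDecomp (FreeGroup (Fin 2)) X ({1, a} : Finset (FreeGroup (Fin 2)))
        (insert 1 (Finset.image b Finset.univ)) ∧
      TarskiNumber (Subgroup.closure ({a} ∪ Set.range b)) X ≤ (n + 3 : ℕ∞) :=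
  stmt16_general n a b Y hcover hinv hfreegen hfreeact
end
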